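/- Let A ∈ ℝ^{m×n}, p ∈ ℝ^m, u ∈ ℝ^n, λ > 0, α ∈ ℝ, and let S ⊆ {1,…,m}. Form the augmented matrix Ã = [I_m √(2λ)A] with rows ã_i and right-hand side p̃ = √(2λ)(p − Au), and assume all counts of nonzero column entries appearing below are nonzero. Then the BICAV update applied to (Ã, p̃) at x̃ = (y, z), namely x̃_j⁺ = x̃_j + α (Σ_{i∈S} ((p̃_i − Σ_k ã_{ik} x̃_k)/(Σ_k ã_{ik}²)) ã_{ij}) / (Σ_{i∈S} 1{ã_{ij} ≠ 0}), expressed in the variables y and x = z + u, equals: y_i⁺ = y_i + α (√(2λ)p_i − √(2λ)(Ax)_i − y_i)/(2λΣ_k a_{ik}² + 1) for i ∈ S (with y_i unchanged for i ∉ S), and x_j⁺ = x_j + α (Σ_{i∈S} ((√(2λ)p_i − √(2λ)(Ax)_i − y_i)/(2λΣ_k a_{ik}² + 1)) √(2λ)a_{ij}) / (Σ_{i∈S} 1{a_{ij} ≠ 0}) for j = 1,…,n. -/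

import Mathlib

open Finset

/-- The augmented matrix `Ã = [I_m  √(2λ)A] ∈ ℝ^{m×(m+n)}`. -/
noncomputable def bicavAugMatrix {m n : ℕ} (A : Matrix (Fin m) (Fin n) ℝ) (lam : ℝ) :
    Matrix (Fin m) (Fin m ⊕ Fin n) ℝ :=
  fun i => Sum.elim (fun k => if i = k then (1 : ℝ) else 0)
    (fun j => Real.sqrt (2 * lam) * A i j)

/-- The augmented right-hand side `p̃ = √(2λ)(p − Au)`. -/
noncomputable def bicavAugRhs {m n : ℕ} (A : Matrix (Fin m) (Fin n) ℝ)
    (p : Fin m → ℝ) (u : Fin n → ℝ) (lam : ℝ) : Fin m → ℝ :=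
  fun i => Real.sqrt (2 * lam) * (p i - A.mulVec u i)

/-- One BICAV update with subset `S` and relaxation `α` applied to the system `(B, q)`:
`x_j⁺ = x_j + α (Σ_{i∈S} ((q_i − Σ_k b_{ik}x_k)/(Σ_k b_{ik}²)) b_{ij}) / (Σ_{i∈S} 1{b_{ij} ≠ 0})`. -/
noncomputable def bicavStep {m : ℕ} {ι : Type*} [Fintype ι]
    (B : Matrix (Fin m) ι ℝ) (q : Fin m → ℝ) (S : Finset (Fin m)) (α : ℝ)
    (x : ι → ℝ) : ι → ℝ :=
  fun j => x j +
    α * (∑ i ∈ S, ((q i - ∑ k, B i k * x k) / (∑ k, (B i k) ^ 2)) * B i j) /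
      (∑ i ∈ S, if B i j ≠ 0 then (1 : ℝ) else 0)

/-!
The augmented matrix is `[I C]` with `C = √(2λ)A`. For such a matrix, row `i` at `(y, z)` has
residual `q_i − (y_i + (Cz)_i)` and squared norm `1 + ‖c_i‖²`, and the identity block meets column
`inl i` only in row `i`: so `y_i` receives the relaxed row-`i` correction when `i ∈ S` (its nonzero
count is `1`) and is unchanged otherwise, while each `z_j` receives the component-averaged
correction. Substituting `q = √(2λ)(p − Au)` and `z = x − u` turns the residual into
`√(2λ)p_i − √(2λ)(Ax)_i − y_i`, and `√(2λ)a_{ij} ≠ 0 ↔ a_{ij} ≠ 0` since `λ > 0`.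
-/

namespace Matrix

variable {m : ℕ} {ι : Type*} [Fintype ι] (C : Matrix (Fin m) ι ℝ)

theorem sum_fromCols_one_mul_sumElim (y : Fin m → ℝ) (z : ι → ℝ) (i : Fin m) :
    ∑ k, fromCols (1 : Matrix (Fin m) (Fin m) ℝ) C i k * Sum.elim y z k = y i + (C *ᵥ z) i := by
  change (fromCols (1 : Matrix (Fin m) (Fin m) ℝ) C *ᵥ Sum.elim y z) i = _
  rw [fromCols_mulVec_sumElim, one_mulVec, Pi.add_apply]

theorem sum_fromCols_one_sq (i : Fin m) :
    ∑ k, fromCols (1 : Matrix (Fin m) (Fin m) ℝ) C i k ^ 2 = 1 + ∑ k, C i k ^ 2 := by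
  simp [Fintype.sum_sum_type, one_apply]

end Matrix

section BlockIdentity

open Matrix

variable {m : ℕ} {ι : Type*} [Fintype ι] (C : Matrix (Fin m) ι ℝ) (q : Fin m → ℝ)
  (S : Finset (Fin m)) (α : ℝ) (y : Fin m → ℝ) (z : ι → ℝ)

theorem bicavStep_fromCols_one_inl (i : Fin m) :
    bicavStep (fromCols (1 : Matrix (Fin m) (Fin m) ℝ) C) q S α (Sum.elim y z) (Sum.inl i) =
      y i + if i ∈ S then α * (q i - (y i + (C *ᵥ z) i)) / (1 + ∑ k, C i k ^ 2) else 0 := by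
  simp only [bicavStep, fromCols_apply_inl, one_apply, Sum.elim_inl,
    sum_fromCols_one_mul_sumElim, sum_fromCols_one_sq, mul_ite, mul_one, mul_zero, ne_eq,
    ite_not, sum_ite_eq']
  by_cases hi : i ∈ S <;> simp [hi, mul_div_assoc]

theorem bicavStep_fromCols_one_inr (j : ι) :
    bicavStep (fromCols (1 : Matrix (Fin m) (Fin m) ℝ) C) q S α (Sum.elim y z) (Sum.inr j) =
      z j + α * (∑ i ∈ S, ((q i - (y i + (C *ᵥ z) i)) / (1 + ∑ k, C i k ^ 2)) * C i j) /
        ∑ i ∈ S, if C i j ≠ 0 then (1 : ℝ) else 0 := by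
  simp only [bicavStep, fromCols_apply_inr, Sum.elim_inr, sum_fromCols_one_mul_sumElim,
    sum_fromCols_one_sq]
  rfl

end BlockIdentity

theorem bicavAugMatrix_eq_fromCols {m n : ℕ} (A : Matrix (Fin m) (Fin n) ℝ) (lam : ℝ) :
    bicavAugMatrix A lam = Matrix.fromCols 1 (Real.sqrt (2 * lam) • A) := by
  ext i (k | j) <;> simp [bicavAugMatrix, Matrix.one_apply]

theorem bicavAugRhs_sub_residual {m n : ℕ} (A : Matrix (Fin m) (Fin n) ℝ) (p : Fin m → ℝ)
    (u : Fin n → ℝ) (lam : ℝ) (y : Fin m → ℝ) (x : Fin n → ℝ) (i : Fin m) :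
    bicavAugRhs A p u lam i - (y i + ((Real.sqrt (2 * lam) • A).mulVec (x - u)) i) =
      Real.sqrt (2 * lam) * p i - Real.sqrt (2 * lam) * A.mulVec x i - y i := by
  simp only [bicavAugRhs, Matrix.smul_mulVec, Matrix.mulVec_sub, Pi.smul_apply, Pi.sub_apply,
    smul_eq_mul]
  ring

theorem one_add_sum_sqrt_smul_sq {m n : ℕ} (A : Matrix (Fin m) (Fin n) ℝ) {lam : ℝ}
    (hlam : 0 ≤ lam) (i : Fin m) :
    1 + ∑ k, (Real.sqrt (2 * lam) • A) i k ^ 2 = 2 * lam * ∑ k, A i k ^ 2 + 1 := by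
  simp only [Matrix.smul_apply, smul_eq_mul, mul_pow, ← mul_sum,
    Real.sq_sqrt (by positivity : (0 : ℝ) ≤ 2 * lam)]
  ring

theorem bicav_prox_update_general
    (m n : ℕ) (A : Matrix (Fin m) (Fin n) ℝ) (p : Fin m → ℝ) (u : Fin n → ℝ)
    (lam α : ℝ) (hlam : 0 < lam) (S : Finset (Fin m))
    (y : Fin m → ℝ) (x : Fin n → ℝ) :
    (∀ i ∈ S,
        bicavStep (bicavAugMatrix A lam) (bicavAugRhs A p u lam) S α
            (Sum.elim y (fun j => x j - u j)) (Sum.inl i) =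
          y i + α * (Real.sqrt (2 * lam) * p i - Real.sqrt (2 * lam) * A.mulVec x i - y i) /
            (2 * lam * (∑ k, (A i k) ^ 2) + 1)) ∧
    (∀ i ∉ S,
        bicavStep (bicavAugMatrix A lam) (bicavAugRhs A p u lam) S α
            (Sum.elim y (fun j => x j - u j)) (Sum.inl i) = y i) ∧
    (∀ j : Fin n,
        bicavStep (bicavAugMatrix A lam) (bicavAugRhs A p u lam) S α
            (Sum.elim y (fun j => x j - u j)) (Sum.inr j) + u j =
          x j + α * (∑ i ∈ S,
              ((Real.sqrt (2 * lam) * p i - Real.sqrt (2 * lam) * A.mulVec x i - y i) /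
                  (2 * lam * (∑ k, (A i k) ^ 2) + 1)) *
                (Real.sqrt (2 * lam) * A i j)) /
            (∑ i ∈ S, if A i j ≠ 0 then (1 : ℝ) else 0)) := by
  have hsqrt : Real.sqrt (2 * lam) ≠ 0 := by positivity
  have hz : (fun j => x j - u j) = x - u := rfl
  simp only [hz, bicavAugMatrix_eq_fromCols, bicavStep_fromCols_one_inl,
    bicavStep_fromCols_one_inr, bicavAugRhs_sub_residual, one_add_sum_sqrt_smul_sq A hlam.le]
  refine ⟨fun i hi => by rw [if_pos hi, mul_div_assoc], fun i hi => by rw [if_neg hi, add_zero],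
    fun j => ?_⟩
  simp only [Matrix.smul_apply, smul_eq_mul, ne_eq, mul_eq_zero, hsqrt, false_or, Pi.sub_apply]
  ring

/-- The BICAV update applied to the augmented system
`[I √(2λ)A]·(y, z) = √(2λ)(p − Au)` at `x̃ = (y, z)` with `z = x − u`, expressed in the
variables `y` and `x = z + u`, gives the stated BICAV proximal update formulas. -/
theorem bicav_prox_update
    (m n : ℕ) (A : Matrix (Fin m) (Fin n) ℝ) (p : Fin m → ℝ) (u : Fin n → ℝ)
    (lam α : ℝ) (hlam : 0 < lam) (S : Finset (Fin m))
    (hcount : ∀ j : Fin n,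
      (∑ i ∈ S, if bicavAugMatrix A lam i (Sum.inr j) ≠ 0 then (1 : ℝ) else 0) ≠ 0)
    (y : Fin m → ℝ) (x : Fin n → ℝ) :
    (∀ i ∈ S,
        bicavStep (bicavAugMatrix A lam) (bicavAugRhs A p u lam) S α
            (Sum.elim y (fun j => x j - u j)) (Sum.inl i) =
          y i + α * (Real.sqrt (2 * lam) * p i - Real.sqrt (2 * lam) * A.mulVec x i - y i) /
            (2 * lam * (∑ k, (A i k) ^ 2) + 1)) ∧
    (∀ i ∉ S,
        bicavStep (bicavAugMatrix A lam) (bicavAugRhs A p u lam) S α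
            (Sum.elim y (fun j => x j - u j)) (Sum.inl i) = y i) ∧
    (∀ j : Fin n,
        bicavStep (bicavAugMatrix A lam) (bicavAugRhs A p u lam) S α
            (Sum.elim y (fun j => x j - u j)) (Sum.inr j) + u j =
          x j + α * (∑ i ∈ S,
              ((Real.sqrt (2 * lam) * p i - Real.sqrt (2 * lam) * A.mulVec x i - y i) /
                  (2 * lam * (∑ k, (A i k) ^ 2) + 1)) *
                (Real.sqrt (2 * lam) * A i j)) /
            (∑ i ∈ S, if A i j ≠ 0 then (1 : ℝ) else 0)) :=
  bicav_prox_update_general m n A p u lam α hlam S y x
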